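/- arXiv:0808.1299 — 4 statements merged into one kernel-verified Lean document; each statement's English description precedes it below -/
import Mathlib

section
/- Let f, g be continuous functions on [0,∞) with f(0) = g(0), and suppose h(t) := f(t) − g(t) is non-negative and non-decreasing. Then Γ(f)(t) ≥ Γ(g)(t) for all t ≥ 0. -/
open Set

/-- The reflection (Skorokhod) map:
`Γ(f)(t) = f(t) + sup_{s ∈ [0,t]} (−f(s))⁺`. -/
noncomputable def reflMap (f : ℝ → ℝ) (t : ℝ) : ℝ :=
  f t + sSup ((fun s => max (-f s) 0) '' Icc 0 t)

/- Writing `h = f - g`, pointwise `(−g s)⁺ ≤ (−f s)⁺ + h s ≤ (−f s)⁺ + h t` for `s ≤ t`, because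
`h ≥ 0` and `h` is non-decreasing. Taking the supremum over `s ∈ [0,t]` and adding `g t = f t − h t`
gives `Γ(g)(t) ≤ Γ(f)(t)`. -/

lemma max_neg_zero_le_max_neg_zero_add_sub {a b : ℝ} (h : b ≤ a) :
    max (-b) 0 ≤ max (-a) 0 + (a - b) :=
  max_le (by linarith [le_max_left (-a) 0]) (by linarith [le_max_right (-a) 0])

lemma Continuous.bddAbove_max_neg_zero_image_Icc {f : ℝ → ℝ} (hf : Continuous f) (a b : ℝ) :
    BddAbove ((fun s => max (-f s) 0) '' Icc a b) :=
  isCompact_Icc.bddAbove_image (hf.neg.max continuous_const).continuousOn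

lemma csSup_image_le_csSup_image_add {α : Type*} {S : Set α} {u v : α → ℝ} {c : ℝ}
    (hS : S.Nonempty) (hv : BddAbove (v '' S)) (huv : ∀ s ∈ S, u s ≤ v s + c) :
    sSup (u '' S) ≤ sSup (v '' S) + c :=
  csSup_le (hS.image u) <| forall_mem_image.2 fun s hs =>
    (huv s hs).trans (add_le_add_left (le_csSup hv (mem_image_of_mem v hs)) c)

theorem reflMap_mono_general (f g : ℝ → ℝ) (hf : Continuous f)
    (hnonneg : ∀ t : ℝ, 0 ≤ t → 0 ≤ f t - g t)
    (hmono : ∀ s t : ℝ, 0 ≤ s → s ≤ t → f s - g s ≤ f t - g t) :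
    ∀ t : ℝ, 0 ≤ t → reflMap g t ≤ reflMap f t := by
  intro t ht
  have hsup : sSup ((fun s => max (-g s) 0) '' Icc 0 t)
      ≤ sSup ((fun s => max (-f s) 0) '' Icc 0 t) + (f t - g t) :=
    csSup_image_le_csSup_image_add (nonempty_Icc.2 ht) (hf.bddAbove_max_neg_zero_image_Icc 0 t)
      fun s hs => (max_neg_zero_le_max_neg_zero_add_sub (sub_nonneg.1 (hnonneg s hs.1))).trans
        (add_le_add_right (hmono s t hs.1 hs.2) _)
  unfold reflMap
  linarith

/-- Monotonicity of the reflection map: if `f(0) = g(0)` and `f − g` is non-negative and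
non-decreasing on `[0,∞)`, then `Γ(f) ≥ Γ(g)` on `[0,∞)`. -/
theorem reflMap_mono (f g : ℝ → ℝ) (hf : Continuous f) (hg : Continuous g)
    (h0 : f 0 = g 0)
    (hnonneg : ∀ t : ℝ, 0 ≤ t → 0 ≤ f t - g t)
    (hmono : ∀ s t : ℝ, 0 ≤ s → s ≤ t → f s - g s ≤ f t - g t) :
    ∀ t : ℝ, 0 ≤ t → reflMap g t ≤ reflMap f t :=
  reflMap_mono_general f g hf hnonneg hmono
end

section
/- Minimality of the reflection map: let φ be continuous on [0,∞), and suppose ψ, η are continuous with ψ non-negative, η(0) = 0, η non-decreasing, and ψ(t) = φ(t) + η(t) for all t ≥ 0. Then ψ(t) ≥ Γ(φ)(t) and η(t) ≥ sup_{s∈[0,t]} (−φ(s))⁺ for all t ≥ 0. -/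
open Set

section Minimality

variable {f g : ℝ → ℝ} {t : ℝ}

theorem sSup_negPart_le_of_monotoneOn (ht : 0 ≤ t) (hg : MonotoneOn g (Icc 0 t))
    (hg0 : 0 ≤ g 0) (hfg : ∀ s ∈ Icc 0 t, 0 ≤ f s + g s) :
    sSup ((fun s => max (-f s) 0) '' Icc 0 t) ≤ g t := by
  have ht_mem : t ∈ Icc 0 t := right_mem_Icc.2 ht
  have hgt : 0 ≤ g t := hg0.trans (hg (left_mem_Icc.2 ht) ht_mem ht)
  refine Real.sSup_le ?_ hgt
  rintro _ ⟨s, hs, rfl⟩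
  have hgs : g s ≤ g t := hg hs ht_mem hs.2
  exact max_le (by linarith [hfg s hs]) hgt

theorem reflMap_le_add_of_monotoneOn (ht : 0 ≤ t) (hg : MonotoneOn g (Icc 0 t))
    (hg0 : 0 ≤ g 0) (hfg : ∀ s ∈ Icc 0 t, 0 ≤ f s + g s) :
    reflMap f t ≤ f t + g t :=
  add_le_add_right (sSup_negPart_le_of_monotoneOn ht hg hg0 hfg) _

end Minimality

theorem reflMap_minimality_general (φ ψ η : ℝ → ℝ)
    (hψ0 : ∀ t : ℝ, 0 ≤ t → 0 ≤ ψ t)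
    (hη0 : η 0 = 0)
    (hηmono : ∀ s t : ℝ, 0 ≤ s → s ≤ t → η s ≤ η t)
    (hdecomp : ∀ t : ℝ, 0 ≤ t → ψ t = φ t + η t) :
    ∀ t : ℝ, 0 ≤ t →
      reflMap φ t ≤ ψ t ∧ sSup ((fun s => max (-φ s) 0) '' Icc 0 t) ≤ η t := by
  intro t ht
  have hmono : MonotoneOn η (Icc 0 t) := fun s hs _ _ hsr => hηmono s _ hs.1 hsr
  have hnonneg : ∀ s ∈ Icc 0 t, 0 ≤ φ s + η s := fun s hs =>
    hdecomp s hs.1 ▸ hψ0 s hs.1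
  refine ⟨?_, sSup_negPart_le_of_monotoneOn ht hmono hη0.ge hnonneg⟩
  rw [hdecomp t ht]
  exact reflMap_le_add_of_monotoneOn ht hmono hη0.ge hnonneg

/-- Minimality of the reflection map: if `ψ = φ + η` with `ψ ≥ 0`, `η(0) = 0` and `η`
non-decreasing, then `ψ ≥ Γ(φ)` and `η(t) ≥ sup_{s∈[0,t]} (−φ(s))⁺`. -/
theorem reflMap_minimality (φ ψ η : ℝ → ℝ)
    (hφ : Continuous φ) (hψ : Continuous ψ) (hη : Continuous η)
    (hψ0 : ∀ t : ℝ, 0 ≤ t → 0 ≤ ψ t)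
    (hη0 : η 0 = 0)
    (hηmono : ∀ s t : ℝ, 0 ≤ s → s ≤ t → η s ≤ η t)
    (hdecomp : ∀ t : ℝ, 0 ≤ t → ψ t = φ t + η t) :
    ∀ t : ℝ, 0 ≤ t →
      reflMap φ t ≤ ψ t ∧ sSup ((fun s => max (-φ s) 0) '' Icc 0 t) ≤ η t :=
  reflMap_minimality_general φ ψ η hψ0 hη0 hηmono hdecomp
end

section
/- Let u > 0, H ∈ (0,1), and let Z be a standard normal random variable. For the first time λ_m = inf{t > 0 : L₀(t) > b_m} with b_m = x + m and L₀(t) = sup_{s∈[0,t]}(u s − W_H(s)), every moment of λ_m is finite; more precisely, for β ≥ 1, E[λ_m^{2β}] ≤ (4^β/u^{2β})(x+m)^{2β} + E[(2|Z|/u)^{2β/(1−H)}] < ∞. -/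
open Set MeasureTheory ProbabilityTheory
open scoped ENNReal NNReal

/-!
On `{λ > t}` the path satisfies `W t ≥ u t - b ≥ u t / 2` as soon as `t > 2 b / u`, so by
self-similarity `P(λ > t) ≤ P(t ≤ (2|Z|/u)^(1/(1-H)))` there. Splitting the layer-cake formula
`E λ^p = p ∫ P(λ > t) t^(p-1) dt` at `T = 2 b / u`, the part below `T` is at most `T^p` and the part
above is at most `E (2|Z|/u)^(p/(1-H))`, which is finite since Gaussians have all moments.
-/

/-- No measurability of `f` is needed: the layer-cake formula is applied to a measurable minorant of
`f` with the same lower integral. -/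
theorem lintegral_rpow_le_lintegral_meas_lt_mul {α : Type*} [MeasurableSpace α] (μ : Measure α)
    {f : α → ℝ} (hf : 0 ≤ f) {p : ℝ} (hp : 0 < p) :
    ∫⁻ a, ENNReal.ofReal (f a ^ p) ∂μ ≤
      ENNReal.ofReal p * ∫⁻ t in Ioi 0, μ {a | t < f a} * ENNReal.ofReal (t ^ (p - 1)) := by
  obtain ⟨g, hg, hgf, hfg⟩ :=
    exists_measurable_le_lintegral_eq μ fun a => ENNReal.ofReal (f a ^ p)
  set h : α → ℝ := fun a => (g a).toReal ^ p⁻¹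
  have hh_le : ∀ a, h a ≤ f a := fun a =>
    calc h a ≤ (f a ^ p) ^ p⁻¹ :=
          Real.rpow_le_rpow ENNReal.toReal_nonneg
            (ENNReal.toReal_le_of_le_ofReal (Real.rpow_nonneg (hf a) p) (hgf a))
            (inv_nonneg.2 hp.le)
      _ = f a := Real.rpow_rpow_inv (hf a) hp.ne'
  have hhg : ∀ a, ENNReal.ofReal (h a ^ p) = g a := fun a => by
    rw [Real.rpow_inv_rpow ENNReal.toReal_nonneg hp.ne',
      ENNReal.ofReal_toReal (ne_top_of_le_ne_top ENNReal.ofReal_ne_top (hgf a))]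
  calc ∫⁻ a, ENNReal.ofReal (f a ^ p) ∂μ = ∫⁻ a, ENNReal.ofReal (h a ^ p) ∂μ := by
        simp only [hfg, hhg]
    _ = ENNReal.ofReal p * ∫⁻ t in Ioi 0, μ {a | t < h a} * ENNReal.ofReal (t ^ (p - 1)) :=
        lintegral_rpow_eq_lintegral_meas_lt_mul μ (ae_of_all _ fun a => by positivity)
          (hg.ennreal_toReal.pow_const _).aemeasurable hp
    _ ≤ _ := by
        gcongr with t a
        exact hh_le a

theorem integrable_mul_abs_rpow_gaussianReal (μ : ℝ) (v : ℝ≥0) {c : ℝ} (hc : 0 ≤ c) {q : ℝ}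
    (hq : 0 ≤ q) : Integrable (fun z => (c * |z|) ^ q) (gaussianReal μ v) := by
  have h := (memLp_id_gaussianReal' (μ := μ) (v := v) (ENNReal.ofReal q)
    ENNReal.ofReal_ne_top).integrable_norm_rpow'
  simp only [id, Real.norm_eq_abs, ENNReal.toReal_ofReal hq] at h
  simpa only [Real.mul_rpow hc (abs_nonneg _)] using h.const_mul (c ^ q)

theorem ofReal_mul_lintegral_Ioc_rpow_sub_one {p T : ℝ} (hp : 0 < p) (hT : 0 ≤ T) :
    ENNReal.ofReal p * ∫⁻ t in Ioc 0 T, ENNReal.ofReal (t ^ (p - 1)) = ENNReal.ofReal (T ^ p) := by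
  have hp1 : -1 < p - 1 := by linarith
  rw [← ofReal_integral_eq_lintegral_ofReal
      (intervalIntegral.intervalIntegrable_rpow' hp1).1
      ((ae_restrict_iff' measurableSet_Ioc).mpr (ae_of_all _ fun t ht => by
        have := ht.1; positivity)),
    ← intervalIntegral.integral_of_le hT, integral_rpow (Or.inl hp1), sub_add_cancel,
    Real.zero_rpow hp.ne', sub_zero, ← ENNReal.ofReal_mul hp.le, mul_div_cancel₀ _ hp.ne']

theorem ofReal_mul_lintegral_Ioi_le_rpow_add {F G : ℝ → ℝ≥0∞} {p T : ℝ} (hp : 0 < p)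
    (hT : 0 ≤ T) (hF : ∀ t, F t ≤ 1) (hFG : ∀ t, T < t → F t ≤ G t) :
    ENNReal.ofReal p * ∫⁻ t in Ioi 0, F t * ENNReal.ofReal (t ^ (p - 1)) ≤
      ENNReal.ofReal (T ^ p) +
        ENNReal.ofReal p * ∫⁻ t in Ioi 0, G t * ENNReal.ofReal (t ^ (p - 1)) := by
  have hsplit : ∫⁻ t in Ioi 0, F t * ENNReal.ofReal (t ^ (p - 1)) =
      (∫⁻ t in Ioc 0 T, F t * ENNReal.ofReal (t ^ (p - 1))) +
        ∫⁻ t in Ioi T, F t * ENNReal.ofReal (t ^ (p - 1)) := by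
    rw [← lintegral_union measurableSet_Ioi Ioc_disjoint_Ioi_same, Ioc_union_Ioi_eq_Ioi hT]
  rw [hsplit, mul_add, ← ofReal_mul_lintegral_Ioc_rpow_sub_one hp hT]
  refine add_le_add (by gcongr with t; exact mul_le_of_le_one_left' (hF t)) (mul_le_mul_right ?_ _)
  calc ∫⁻ t in Ioi T, F t * ENNReal.ofReal (t ^ (p - 1))
      ≤ ∫⁻ t in Ioi T, G t * ENNReal.ofReal (t ^ (p - 1)) :=
        setLIntegral_mono' measurableSet_Ioi fun t ht => by gcongr; exact hFG t ht
    _ ≤ _ := lintegral_mono_set (Ioi_subset_Ioi hT)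

theorem le_rpow_inv_of_mul_le_mul_rpow {u t z H : ℝ} (hu : 0 < u) (ht : 0 < t) (hH : H < 1)
    (h : u * t ≤ 2 * z * t ^ H) : t ≤ (2 * |z| / u) ^ (1 - H)⁻¹ := by
  have htH := Real.rpow_pos_of_pos ht H
  have h1 : t ^ (1 - H) ≤ 2 * |z| / u := by
    rw [Real.rpow_sub ht, Real.rpow_one, div_le_div_iff₀ htH hu]
    nlinarith [le_abs_self z]
  calc t = (t ^ (1 - H)) ^ (1 - H)⁻¹ := (Real.rpow_rpow_inv ht.le (by linarith)).symm
    _ ≤ _ := by gcongr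

/-- `λ = inf {t > 0 : sup_{s ∈ [0,t]} (u s - w s) > b}`, which is `0` (as `sInf ∅ = 0`) if the level
`b` is never exceeded. -/
noncomputable def passageTime (u b : ℝ) (w : ℝ → ℝ) : ℝ :=
  sInf {t | 0 < t ∧ b < sSup ((fun s => u * s - w s) '' Icc 0 t)}

theorem sub_le_of_lt_passageTime {u b t : ℝ} {w : ℝ → ℝ} (hw : Continuous w) (ht : 0 < t)
    (hlt : t < passageTime u b w) : u * t - b ≤ w t := by
  have hsup : sSup ((fun s => u * s - w s) '' Icc 0 t) ≤ b := by
    simpa [ht] using notMem_of_lt_csInf hlt ⟨0, fun s hs => hs.1.le⟩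
  have hle : u * t - w t ≤ sSup ((fun s => u * s - w s) '' Icc 0 t) :=
    le_csSup (isCompact_Icc.image (by fun_prop)).bddAbove (mem_image_of_mem _ ⟨ht.le, le_rfl⟩)
  linarith

theorem passageTime_nonneg (u b : ℝ) (w : ℝ → ℝ) : 0 ≤ passageTime u b w :=
  Real.sInf_nonneg fun _ ht => ht.1.le

theorem measure_lt_passageTime_le {Ω : Type*} [MeasurableSpace Ω] (P : Measure Ω)
    {W : ℝ → Ω → ℝ} (hW : ∀ ω, Continuous fun t => W t ω) (hWmeas : ∀ t, Measurable (W t))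
    {H : ℝ} (hlaw : ∀ t, 0 < t → P.map (fun ω => W t ω / t ^ H) = gaussianReal 0 1)
    (hH : H < 1) {u b t : ℝ} (hu : 0 < u) (hb : 0 ≤ b) (hbt : 2 * b / u < t) :
    P {ω | t < passageTime u b (W · ω)} ≤
      gaussianReal 0 1 {z | t ≤ (2 * |z| / u) ^ (1 - H)⁻¹} := by
  have ht : 0 < t := (div_nonneg (by positivity) hu.le).trans_lt hbt
  rw [div_lt_iff₀ hu] at hbt
  have htH := Real.rpow_pos_of_pos ht H
  calc P {ω | t < passageTime u b (W · ω)}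
      ≤ P ((fun ω => W t ω / t ^ H) ⁻¹' Ici ((u * t - b) / t ^ H)) := measure_mono fun ω hω =>
        div_le_div_of_nonneg_right (sub_le_of_lt_passageTime (hW ω) ht hω) htH.le
    _ = gaussianReal 0 1 (Ici ((u * t - b) / t ^ H)) := by
        rw [← hlaw t ht, Measure.map_apply ((hWmeas t).div_const _) measurableSet_Ici]
    _ ≤ _ := measure_mono fun z hz => le_rpow_inv_of_mul_le_mul_rpow hu ht hH <| by
        have := (div_le_iff₀ htH).1 hz
        linarith

theorem passage_time_moments_general
    {Ω : Type*} [MeasurableSpace Ω] (P : Measure Ω) [IsProbabilityMeasure P]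
    (H : ℝ) (hH : H ∈ Ioo (0:ℝ) 1)
    (W : ℝ → Ω → ℝ)
    (hWcont : ∀ ω, Continuous fun t => W t ω)
    (hWmeas : ∀ t : ℝ, Measurable (W t))
    (hlaw : ∀ t : ℝ, 0 < t →
      P.map (fun ω => W t ω / t ^ H) = gaussianReal 0 1)
    (u x m : ℝ) (hu : 0 < u) (hx : 0 ≤ x) (hm : 0 ≤ m)
    (L₀ : ℝ → Ω → ℝ)
    (hL₀ : ∀ t ω, L₀ t ω = sSup ((fun s => u * s - W s ω) '' Icc 0 t))
    (lam : Ω → ℝ)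
    (hlam : ∀ ω, lam ω = sInf {t : ℝ | 0 < t ∧ x + m < L₀ t ω})
    (β : ℝ) (hβ : 1 ≤ β) :
    (∫⁻ ω, ENNReal.ofReal (lam ω ^ (2 * β)) ∂P)
      ≤ ENNReal.ofReal ((4:ℝ) ^ β / u ^ (2 * β) * (x + m) ^ (2 * β))
        + ∫⁻ z, ENNReal.ofReal ((2 * |z| / u) ^ (2 * β / (1 - H))) ∂(gaussianReal 0 1)
    ∧ ENNReal.ofReal ((4:ℝ) ^ β / u ^ (2 * β) * (x + m) ^ (2 * β))
        + (∫⁻ z, ENNReal.ofReal ((2 * |z| / u) ^ (2 * β / (1 - H))) ∂(gaussianReal 0 1))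
      < ⊤ := by
  have hH1 : 0 < 1 - H := sub_pos.2 hH.2
  have hp : 0 < 2 * β := by linarith
  have hb : 0 ≤ x + m := add_nonneg hx hm
  have hlam_eq : lam = fun ω => passageTime u (x + m) (W · ω) := by
    ext ω
    simp only [hlam, hL₀, passageTime]
  set g : ℝ → ℝ := fun z => (2 * |z| / u) ^ (1 - H)⁻¹
  have hg_pow : ∀ z, g z ^ (2 * β) = (2 * |z| / u) ^ (2 * β / (1 - H)) := fun z => by
    rw [← Real.rpow_mul (by positivity), inv_mul_eq_div]
  have hT_pow : (2 * (x + m) / u) ^ (2 * β) = (4:ℝ) ^ β / u ^ (2 * β) * (x + m) ^ (2 * β) := by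
    rw [Real.div_rpow (by positivity) hu.le, Real.mul_rpow zero_le_two hb,
      Real.rpow_mul zero_le_two]
    norm_num
    ring
  have htail : ∀ t, 2 * (x + m) / u < t → P {ω | t < lam ω} ≤ gaussianReal 0 1 {z | t ≤ g z} :=
    fun t ht => hlam_eq ▸ measure_lt_passageTime_le P hWcont hWmeas hlaw hH.2 hu hb ht
  refine ⟨?_, ENNReal.add_lt_top.2 ⟨ENNReal.ofReal_lt_top, ?_⟩⟩
  · calc ∫⁻ ω, ENNReal.ofReal (lam ω ^ (2 * β)) ∂P
        ≤ ENNReal.ofReal (2 * β) *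
            ∫⁻ t in Ioi 0, P {ω | t < lam ω} * ENNReal.ofReal (t ^ (2 * β - 1)) :=
          lintegral_rpow_le_lintegral_meas_lt_mul P (hlam_eq ▸ fun ω => passageTime_nonneg _ _ _) hp
      _ ≤ ENNReal.ofReal ((2 * (x + m) / u) ^ (2 * β)) + ENNReal.ofReal (2 * β) *
            ∫⁻ t in Ioi 0, gaussianReal 0 1 {z | t ≤ g z} * ENNReal.ofReal (t ^ (2 * β - 1)) :=
          ofReal_mul_lintegral_Ioi_le_rpow_add hp (by positivity) (fun _ => prob_le_one) htail
      _ = _ := by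
          rw [← lintegral_rpow_eq_lintegral_meas_le_mul _ (ae_of_all _ fun z => by positivity)
            (by fun_prop) hp, hT_pow]
          simp only [hg_pow]
  · simp_rw [mul_div_right_comm (2 : ℝ)]
    exact (integrable_mul_abs_rpow_gaussianReal 0 1 (by positivity)
      (by positivity)).lintegral_lt_top

/-- Moments of the passage time `λ_m = inf{t > 0 : L₀(t) > x + m}` of the regulator
`L₀(t) = sup_{s∈[0,t]}(u s − W(s))` of an fBM-driven queue: for `β ≥ 1`,
`E[λ_m^{2β}] ≤ (4^β/u^{2β})(x+m)^{2β} + E[(2|Z|/u)^{2β/(1−H)}] < ∞`, with `Z` standard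
normal. The fBM is encoded through continuous paths vanishing at `0` and the
self-similarity property that `W(t)/t^H` is standard normal for each `t > 0`. -/
theorem passage_time_moments
    {Ω : Type*} [MeasurableSpace Ω] (P : Measure Ω) [IsProbabilityMeasure P]
    (H : ℝ) (hH : H ∈ Ioo (0:ℝ) 1)
    (W : ℝ → Ω → ℝ)
    (hWcont : ∀ ω, Continuous fun t => W t ω)
    (hW0 : ∀ ω, W 0 ω = 0)
    (hWmeas : ∀ t : ℝ, Measurable (W t))
    (hlaw : ∀ t : ℝ, 0 < t →
      P.map (fun ω => W t ω / t ^ H) = gaussianReal 0 1)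
    (u x m : ℝ) (hu : 0 < u) (hx : 0 ≤ x) (hm : 0 ≤ m)
    (L₀ : ℝ → Ω → ℝ)
    (hL₀ : ∀ t ω, L₀ t ω = sSup ((fun s => u * s - W s ω) '' Icc 0 t))
    (lam : Ω → ℝ)
    (hlam : ∀ ω, lam ω = sInf {t : ℝ | 0 < t ∧ x + m < L₀ t ω})
    (β : ℝ) (hβ : 1 ≤ β) :
    (∫⁻ ω, ENNReal.ofReal (lam ω ^ (2 * β)) ∂P)
      ≤ ENNReal.ofReal ((4:ℝ) ^ β / u ^ (2 * β) * (x + m) ^ (2 * β))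
        + ∫⁻ z, ENNReal.ofReal ((2 * |z| / u) ^ (2 * β / (1 - H))) ∂(gaussianReal 0 1)
    ∧ ENNReal.ofReal ((4:ℝ) ^ β / u ^ (2 * β) * (x + m) ^ (2 * β))
        + (∫⁻ z, ENNReal.ofReal ((2 * |z| / u) ^ (2 * β / (1 - H))) ∂(gaussianReal 0 1))
      < ⊤ :=
  passage_time_moments_general P H hH W hWcont hWmeas hlaw u x m hu hx hm L₀ hL₀ lam hlam β hβ
end

section
/- Suppose P(Z_u ≥ m) ≤ exp(−c m^{2(1−H)}) for all large m (some c > 0, H ∈ (1/2,1)) and E[λ_{m+1}^{2β}] ≤ A (x+m+1)^{2β} + B for constants A, B. Then the coupling time τ₀ (equal to λ_{Z} where Z is an independent copy-like random level with the tail bound above) satisfies E[τ₀^β] ≤ Σ_{m=0}^∞ [E(λ_{m+1}^{2β}) P(Z ≥ m)]^{1/2} < ∞ for every β ≥ 1. -/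
/-!
Split `Ω` according to the integer part `m = ⌊Z⌋₊`. On `{⌊Z⌋₊ = m}` we have `τ₀ ≤ λ_{m+1}` by
monotonicity, so Cauchy–Schwarz bounds the contribution of this piece by
`(E[λ_{m+1}^{2β}] · P(Z ≥ m))^{1/2}`. The moments grow polynomially in `m` while the tail
decays like `exp(-c m^{2(1-H)})`, so the series of these bounds converges.
-/

open Set Filter MeasureTheory Asymptotics
open scoped ENNReal

theorem summable_rpow_mul_exp_neg_mul_rpow (s : ℝ) {a b : ℝ} (ha : 0 < a) (hb : 0 < b) :
    Summable fun n : ℕ => (n : ℝ) ^ s * Real.exp (-a * (n : ℝ) ^ b) := by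
  have hlim : Tendsto (fun n : ℕ => (n : ℝ) ^ (s + 2) * Real.exp (-a * (n : ℝ) ^ b))
      atTop (nhds 0) := by
    refine ((tendsto_rpow_mul_exp_neg_mul_atTop_nhds_zero ((s + 2) / b) a ha).comp
      ((tendsto_rpow_atTop hb).comp tendsto_natCast_atTop_atTop)).congr fun n => ?_
    simp only [Function.comp_apply]
    rw [← Real.rpow_mul n.cast_nonneg, mul_div_cancel₀ _ hb.ne']
  refine summable_of_isBigO_nat (Real.summable_nat_rpow.2 (by norm_num : (-2 : ℝ) < -1)) ?_
  refine ((hlim.isBigO_one ℝ).mul (isBigO_refl (fun n : ℕ => (n : ℝ) ^ (-2 : ℝ)) _)).congr'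
    ?_ (by simp)
  filter_upwards [eventually_gt_atTop 0] with n hn
  rw [mul_right_comm, ← Real.rpow_add (by exact_mod_cast hn)]
  ring_nf

theorem isBigO_rpow_add_const_atTop {s : ℝ} (hs : 0 ≤ s) (a : ℝ) :
    (fun t : ℝ => (t + a) ^ s) =O[atTop] fun t => t ^ s :=
  ((isBigO_refl _ _).add (isLittleO_const_id_atTop a).isBigO).rpow hs (eventually_ge_atTop 0)

theorem isBigO_mul_rpow_add_add_const_atTop {s : ℝ} (hs : 0 < s) (A a B : ℝ) :
    (fun t : ℝ => A * (t + a) ^ s + B) =O[atTop] fun t => t ^ s :=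
  ((isBigO_rpow_add_const_atTop hs.le a).const_mul_left A).add <|
    (isLittleO_const_left.2 <| Or.inr <|
      tendsto_norm_atTop_atTop.comp (tendsto_rpow_atTop hs)).isBigO

theorem ENNReal.tsum_lt_top_of_eventually_le_ofReal {f : ℕ → ℝ≥0∞} {g : ℕ → ℝ}
    (hf : ∀ n, f n ≠ ∞) (hfg : ∀ᶠ n in atTop, f n ≤ ENNReal.ofReal (g n)) (hg : Summable g) :
    ∑' n, f n < ∞ := by
  lift f to ℕ → NNReal using hf
  refine lt_top_iff_ne_top.2 (ENNReal.tsum_coe_ne_top_iff_summable.2 ?_)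
  refine NNReal.summable_coe.1 (hg.abs.of_norm_bounded_eventually_nat ?_)
  filter_upwards [hfg] with n hn
  simpa using ENNReal.toReal_le_of_le_ofReal (abs_nonneg _)
    (hn.trans (ENNReal.ofReal_le_ofReal (le_abs_self _)))

theorem ENNReal.tsum_mul_rpow_lt_top_of_isBigO_of_le_exp {a b : ℕ → ℝ≥0∞} {f : ℕ → ℝ}
    {s c r p : ℝ} (hc : 0 < c) (hr : 0 < r) (hp : 0 < p)
    (ha : ∀ n, a n ≤ ENNReal.ofReal (f n)) (hf : f =O[atTop] fun n => (n : ℝ) ^ s)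
    (hb_ne_top : ∀ n, b n ≠ ∞)
    (hb : ∀ᶠ n in atTop, b n ≤ ENNReal.ofReal (Real.exp (-c * (n : ℝ) ^ r))) :
    ∑' n, (a n * b n) ^ p < ∞ := by
  obtain ⟨C, hC0, hC⟩ := hf.exists_nonneg
  refine ENNReal.tsum_lt_top_of_eventually_le_ofReal
    (fun n => ENNReal.rpow_ne_top_of_nonneg hp.le
      (ENNReal.mul_ne_top ((ha n).trans_lt ENNReal.ofReal_lt_top).ne (hb_ne_top n))) ?_
    ((summable_rpow_mul_exp_neg_mul_rpow (s * p) (a := c * p) (by positivity) hr).mul_left (C ^ p))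
  filter_upwards [hC.bound, hb] with n hfn hbn
  have hfC : f n ≤ C * (n : ℝ) ^ s := by
    rw [Real.norm_of_nonneg (Real.rpow_nonneg n.cast_nonneg s)] at hfn
    exact (Real.le_norm_self _).trans hfn
  calc (a n * b n) ^ p
      ≤ (ENNReal.ofReal (C * (n : ℝ) ^ s) * ENNReal.ofReal (Real.exp (-c * (n : ℝ) ^ r))) ^ p := by
        gcongr
        exact (ha n).trans (ENNReal.ofReal_le_ofReal hfC)
    _ = ENNReal.ofReal (C ^ p * ((n : ℝ) ^ (s * p) * Real.exp (-(c * p) * (n : ℝ) ^ r))) := by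
        rw [← ENNReal.ofReal_mul (by positivity),
          ENNReal.ofReal_rpow_of_nonneg (by positivity) hp.le,
          Real.mul_rpow (by positivity) (by positivity), Real.mul_rpow hC0 (by positivity),
          ← Real.rpow_mul n.cast_nonneg, ← Real.exp_mul]
        ring_nf

section
variable {Ω : Type*} [MeasurableSpace Ω] {μ : Measure Ω}

theorem setLIntegral_le_lintegral_rpow_mul_measure_rpow {p q : ℝ} (hpq : p.HolderConjugate q)
    {f : Ω → ℝ≥0∞} (hf : AEMeasurable f μ) (s : Set Ω) :
    ∫⁻ ω in s, f ω ∂μ ≤ (∫⁻ ω, f ω ^ p ∂μ) ^ (1 / p) * μ s ^ (1 / q) :=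
  calc ∫⁻ ω in s, f ω ∂μ = ∫⁻ ω in s, (f * 1) ω ∂μ := by simp
    _ ≤ (∫⁻ ω in s, f ω ^ p ∂μ) ^ (1 / p) * (∫⁻ ω in s, (1 : Ω → ℝ≥0∞) ω ^ q ∂μ) ^ (1 / q) :=
      ENNReal.lintegral_mul_le_Lp_mul_Lq _ hpq hf.restrict aemeasurable_const
    _ = (∫⁻ ω in s, f ω ^ p ∂μ) ^ (1 / p) * μ s ^ (1 / q) := by simp
    _ ≤ (∫⁻ ω, f ω ^ p ∂μ) ^ (1 / p) * μ s ^ (1 / q) := by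
      gcongr
      · exact hpq.one_div_nonneg
      · exact Measure.restrict_le_self

theorem lintegral_eq_tsum_setLIntegral_preimage_singleton {β : Type*} [Countable β]
    [MeasurableSpace β] [MeasurableSingletonClass β] {N : Ω → β} (hN : Measurable N)
    (f : Ω → ℝ≥0∞) : ∫⁻ ω, f ω ∂μ = ∑' b, ∫⁻ ω in N ⁻¹' {b}, f ω ∂μ := by
  rw [← lintegral_iUnion (fun b => hN (measurableSet_singleton b)) (pairwise_disjoint_fiber N),
    ← preimage_iUnion, iUnion_of_singleton, preimage_univ, Measure.restrict_univ]

theorem lintegral_le_tsum_of_le_nat_floor {Z : Ω → ℝ} (hZ : Measurable Z) (hZ0 : ∀ ω, 0 ≤ Z ω)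
    {p q : ℝ} (hpq : p.HolderConjugate q) {F : Ω → ℝ≥0∞} {G : ℕ → Ω → ℝ≥0∞}
    (hG : ∀ n, AEMeasurable (G n) μ) (hFG : ∀ ω, F ω ≤ G ⌊Z ω⌋₊ ω) :
    ∫⁻ ω, F ω ∂μ ≤
      ∑' n : ℕ, (∫⁻ ω, G n ω ^ p ∂μ) ^ (1 / p) * μ {ω | (n : ℝ) ≤ Z ω} ^ (1 / q) := by
  rw [lintegral_eq_tsum_setLIntegral_preimage_singleton hZ.nat_floor]
  refine ENNReal.tsum_le_tsum fun n => ?_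
  have hfiber : (fun ω => ⌊Z ω⌋₊) ⁻¹' {n} ⊆ {ω | (n : ℝ) ≤ Z ω} := by
    rintro ω rfl
    exact Nat.floor_le (hZ0 ω)
  calc ∫⁻ ω in (fun ω => ⌊Z ω⌋₊) ⁻¹' {n}, F ω ∂μ
      ≤ ∫⁻ ω in (fun ω => ⌊Z ω⌋₊) ⁻¹' {n}, G n ω ∂μ :=
        setLIntegral_mono_ae' (hZ.nat_floor (measurableSet_singleton n))
          (ae_of_all _ fun ω hω => (congrArg (G · ω) hω).symm ▸ hFG ω)
    _ ≤ (∫⁻ ω, G n ω ^ p ∂μ) ^ (1 / p) * μ ((fun ω => ⌊Z ω⌋₊) ⁻¹' {n}) ^ (1 / q) :=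
        setLIntegral_le_lintegral_rpow_mul_measure_rpow hpq (hG n) _
    _ ≤ _ := by gcongr; exact hpq.symm.one_div_nonneg

end

theorem coupling_time_moment_bound_general
    {Ω : Type*} [MeasurableSpace Ω] (P : Measure Ω) [IsProbabilityMeasure P]
    (H c A B x : ℝ) (hH : H ∈ Ioo (1/2 : ℝ) 1) (hc : 0 < c)
    (lam : ℝ → Ω → ℝ)
    (hlam_nonneg : ∀ y ω, 0 ≤ lam y ω)
    (hlam_mono : ∀ ω, Monotone fun y => lam y ω)
    (hlam_meas : ∀ y : ℝ, Measurable (lam y))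
    (Z : Ω → ℝ) (hZmeas : Measurable Z) (hZnonneg : ∀ ω, 0 ≤ Z ω)
    (M : ℕ)
    (htail : ∀ m : ℕ, M ≤ m →
      P {ω | (m : ℝ) ≤ Z ω} ≤ ENNReal.ofReal (Real.exp (-c * (m : ℝ) ^ (2 * (1 - H)))))
    (β : ℝ) (hβ : 1 ≤ β)
    (hmom : ∀ m : ℕ,
      (∫⁻ ω, ENNReal.ofReal (lam ((m : ℝ) + 1) ω ^ (2 * β)) ∂P)
        ≤ ENNReal.ofReal (A * (x + (m : ℝ) + 1) ^ (2 * β) + B))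
    (tau : Ω → ℝ) (htau : ∀ ω, tau ω = lam (Z ω) ω) :
    (∫⁻ ω, ENNReal.ofReal (tau ω ^ β) ∂P)
      ≤ (∑' m : ℕ,
          ((∫⁻ ω, ENNReal.ofReal (lam ((m : ℝ) + 1) ω ^ (2 * β)) ∂P)
            * P {ω | (m : ℝ) ≤ Z ω}) ^ (1/2 : ℝ))
    ∧ (∑' m : ℕ,
          ((∫⁻ ω, ENNReal.ofReal (lam ((m : ℝ) + 1) ω ^ (2 * β)) ∂P)
            * P {ω | (m : ℝ) ≤ Z ω}) ^ (1/2 : ℝ)) < ⊤ := by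
  have hβ0 : 0 ≤ β := by linarith
  have hsq (y : ℝ) (ω : Ω) :
      ENNReal.ofReal (lam y ω ^ β) ^ (2 : ℝ) = ENNReal.ofReal (lam y ω ^ (2 * β)) := by
    rw [ENNReal.ofReal_rpow_of_nonneg (Real.rpow_nonneg (hlam_nonneg y ω) β) zero_le_two,
      ← Real.rpow_mul (hlam_nonneg y ω), mul_comm]
  have hτ (ω : Ω) : ENNReal.ofReal (tau ω ^ β) ≤ ENNReal.ofReal (lam (⌊Z ω⌋₊ + 1) ω ^ β) :=
    ENNReal.ofReal_le_ofReal <| htau ω ▸ Real.rpow_le_rpow (hlam_nonneg _ ω)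
      (hlam_mono ω (Nat.lt_floor_add_one (Z ω)).le) hβ0
  have hgrowth : (fun m : ℕ => A * (x + m + 1) ^ (2 * β) + B) =O[atTop]
      fun m : ℕ => (m : ℝ) ^ (2 * β) :=
    (isBigO_mul_rpow_add_add_const_atTop (by linarith) A (x + 1) B).natCast_atTop.congr_left
      fun m => by ring_nf
  refine ⟨?_, ENNReal.tsum_mul_rpow_lt_top_of_isBigO_of_le_exp hc (by linarith [hH.2])
    (by norm_num) hmom hgrowth (fun _ => measure_ne_top _ _) (eventually_atTop.2 ⟨M, htail⟩)⟩
  refine (lintegral_le_tsum_of_le_nat_floor hZmeas hZnonneg Real.HolderConjugate.two_two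
    (G := fun n ω => ENNReal.ofReal (lam ((n : ℝ) + 1) ω ^ β))
    (fun n => ((hlam_meas _).pow_const β).ennreal_ofReal.aemeasurable) hτ).trans_eq
    (tsum_congr fun n => ?_)
  rw [ENNReal.mul_rpow_of_nonneg _ _ (by norm_num)]
  simp only [hsq]

/-- Finiteness of the moments of the coupling time `τ₀ = λ_Z`: if the random level `Z ≥ 0`
has a stretched-exponential tail, `y ↦ λ_y` is non-negative and non-decreasing, and the
moments `E[λ_{m+1}^{2β}]` grow at most polynomially, then
`E[τ₀^β] ≤ Σ_m [E(λ_{m+1}^{2β}) P(Z ≥ m)]^{1/2} < ∞` for every `β ≥ 1`. -/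
theorem coupling_time_moment_bound
    {Ω : Type*} [MeasurableSpace Ω] (P : Measure Ω) [IsProbabilityMeasure P]
    (H c A B x : ℝ) (hH : H ∈ Ioo (1/2 : ℝ) 1) (hc : 0 < c)
    (hA : 0 ≤ A) (hB : 0 ≤ B) (hx : 0 ≤ x)
    (lam : ℝ → Ω → ℝ)
    (hlam_nonneg : ∀ y ω, 0 ≤ lam y ω)
    (hlam_mono : ∀ ω, Monotone fun y => lam y ω)
    (hlam_meas : ∀ y : ℝ, Measurable (lam y))
    (Z : Ω → ℝ) (hZmeas : Measurable Z) (hZnonneg : ∀ ω, 0 ≤ Z ω)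
    (M : ℕ)
    (htail : ∀ m : ℕ, M ≤ m →
      P {ω | (m : ℝ) ≤ Z ω} ≤ ENNReal.ofReal (Real.exp (-c * (m : ℝ) ^ (2 * (1 - H)))))
    (β : ℝ) (hβ : 1 ≤ β)
    (hmom : ∀ m : ℕ,
      (∫⁻ ω, ENNReal.ofReal (lam ((m : ℝ) + 1) ω ^ (2 * β)) ∂P)
        ≤ ENNReal.ofReal (A * (x + (m : ℝ) + 1) ^ (2 * β) + B))
    (tau : Ω → ℝ) (htau : ∀ ω, tau ω = lam (Z ω) ω) (htaumeas : Measurable tau) :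
    (∫⁻ ω, ENNReal.ofReal (tau ω ^ β) ∂P)
      ≤ (∑' m : ℕ,
          ((∫⁻ ω, ENNReal.ofReal (lam ((m : ℝ) + 1) ω ^ (2 * β)) ∂P)
            * P {ω | (m : ℝ) ≤ Z ω}) ^ (1/2 : ℝ))
    ∧ (∑' m : ℕ,
          ((∫⁻ ω, ENNReal.ofReal (lam ((m : ℝ) + 1) ω ^ (2 * β)) ∂P)
            * P {ω | (m : ℝ) ≤ Z ω}) ^ (1/2 : ℝ)) < ⊤ :=
  coupling_time_moment_bound_general P H c A B x hH hc lam hlam_nonneg hlam_mono hlam_meas Z hZmeas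
    hZnonneg M htail β hβ hmom tau htau
end
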